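/- arXiv:1709.00081 — 7 statements merged into one kernel-verified Lean document; each statement's English description precedes it below -/
import Mathlib

section
/- Let Z^a be a real n_a×q matrix, Z^b a real n_b×q matrix, x^a ∈ ℝ^{n_a}, y^b ∈ ℝ^{n_b} (n_a, n_b ≥ 1). Define S^a_zz = (Z^a)ᵀZ^a/n_a, S^b_zz = (Z^b)ᵀZ^b/n_b, S^a_zx = (Z^a)ᵀx^a/n_a, S^b_zy = (Z^b)ᵀy^b/n_b, and assume S^a_zz and S^b_zz are invertible. Let γ̂ = (S^a_zz)^{-1}S^a_zx ∈ ℝ^q and x̂^b = Z^b γ̂ ∈ ℝ^{n_b}, and assume (x̂^b)ᵀx̂^b ≠ 0. Then the GMM estimator with weighting matrix W = S^b_zz, namely β̂ = [(S^a_zx)ᵀ(S^a_zz)^{-1} W (S^a_zz)^{-1} S^a_zx]^{-1} · [(S^a_zx)ᵀ(S^a_zz)^{-1} W (S^b_zz)^{-1} S^b_zy], equals the two-sample two-stage least squares estimator β̂_TSTSLS = [(x̂^b)ᵀx̂^b]^{-1} (x̂^b)ᵀ y^b. -/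
open Matrix

/-- The GMM estimator with weighting matrix `W = S^b_zz` equals the
two-sample two-stage least squares (TSTSLS) estimator. -/
theorem gmm_with_Sbzz_weight_eq_tstsls
    (q na nb : ℕ) (hna : 1 ≤ na) (hnb : 1 ≤ nb)
    (Za : Matrix (Fin na) (Fin q) ℝ) (Zb : Matrix (Fin nb) (Fin q) ℝ)
    (xa : Fin na → ℝ) (yb : Fin nb → ℝ)
    -- sample covariance matrices / cross-moments
    (Sazz : Matrix (Fin q) (Fin q) ℝ) (hSazz : Sazz = ((na : ℝ)⁻¹) • (Zaᵀ * Za))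
    (Sbzz : Matrix (Fin q) (Fin q) ℝ) (hSbzz : Sbzz = ((nb : ℝ)⁻¹) • (Zbᵀ * Zb))
    (Sazx : Fin q → ℝ) (hSazx : Sazx = ((na : ℝ)⁻¹) • (Zaᵀ.mulVec xa))
    (Sbzy : Fin q → ℝ) (hSbzy : Sbzy = ((nb : ℝ)⁻¹) • (Zbᵀ.mulVec yb))
    -- invertibility of the instrument covariance matrices
    (hSazzInv : IsUnit Sazz.det) (hSbzzInv : IsUnit Sbzz.det)
    -- first-stage coefficients and predicted exposure in sample b
    (γhat : Fin q → ℝ) (hγhat : γhat = Sazz⁻¹.mulVec Sazx)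
    (xhatb : Fin nb → ℝ) (hxhatb : xhatb = Zb.mulVec γhat)
    (hxx : xhatb ⬝ᵥ xhatb ≠ 0) :
    (Sazx ⬝ᵥ (Sazz⁻¹ * Sbzz * Sazz⁻¹).mulVec Sazx)⁻¹ *
      (Sazx ⬝ᵥ (Sazz⁻¹ * Sbzz * Sbzz⁻¹).mulVec Sbzy) =
    (xhatb ⬝ᵥ xhatb)⁻¹ * (xhatb ⬝ᵥ yb) := by
  have hnb0 : (nb : ℝ) ≠ 0 := Nat.cast_ne_zero.mpr (by omega)
  have hsymA : Sazz⁻¹ᵀ = Sazz⁻¹ := by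
    rw [Matrix.transpose_nonsing_inv]
    congr 1
    rw [hSazz, Matrix.transpose_smul, Matrix.transpose_mul, Matrix.transpose_transpose]
  -- key: Sazx ⬝ᵥ Sazz⁻¹.mulVec v = γhat ⬝ᵥ v
  have key : ∀ v : Fin q → ℝ, Sazx ⬝ᵥ Sazz⁻¹.mulVec v = γhat ⬝ᵥ v := by
    intro v
    rw [Matrix.dotProduct_mulVec, hγhat, ← Matrix.mulVec_transpose, hsymA]
  -- denominator
  have hden : Sazx ⬝ᵥ (Sazz⁻¹ * Sbzz * Sazz⁻¹).mulVec Sazx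
      = (nb : ℝ)⁻¹ * (xhatb ⬝ᵥ xhatb) := by
    rw [← Matrix.mulVec_mulVec, ← Matrix.mulVec_mulVec, key, ← hγhat,
      hSbzz, Matrix.smul_mulVec, dotProduct_smul, ← Matrix.mulVec_mulVec,
      Matrix.dotProduct_mulVec, Matrix.vecMul_transpose, hxhatb]
    rfl
  -- numerator
  have hBB : Sbzz * Sbzz⁻¹ = 1 := Matrix.mul_nonsing_inv _ hSbzzInv
  have hnum : Sazx ⬝ᵥ (Sazz⁻¹ * Sbzz * Sbzz⁻¹).mulVec Sbzy
      = (nb : ℝ)⁻¹ * (xhatb ⬝ᵥ yb) := by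
    rw [mul_assoc, hBB, mul_one, key, hSbzy, dotProduct_smul,
      Matrix.dotProduct_mulVec, Matrix.vecMul_transpose, hxhatb]
    rfl
  rw [hden, hnum, mul_inv]
  field_simp
end

section
/- Let q ≥ 1, let Ω and W be symmetric positive definite q×q real matrices, and let d ∈ ℝ^q with d ≠ 0. Then (dᵀ W Ω W d)/(dᵀ W d)² ≥ 1/(dᵀ Ω^{-1} d), and equality holds when W = Ω^{-1}. -/
/-!
Put `e := Ω⁻¹ d`, so that `Ω e = d`. For the inner product `⟨x, y⟩ := xᵀ Ω y` one has
`⟨W d, W d⟩ = dᵀ W Ω W d`, `⟨W d, e⟩ = dᵀ W d` and `⟨e, e⟩ = dᵀ Ω⁻¹ d`, so the bound is the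
Cauchy–Schwarz inequality `⟨W d, e⟩² ≤ ⟨W d, W d⟩ ⟨e, e⟩`, divided by `(dᵀ W d)² (dᵀ Ω⁻¹ d) > 0`.
-/

open Matrix

namespace Matrix

variable {n R : Type*} [Fintype n]

theorem PosSemidef.sq_dotProduct_mulVec_le [DecidableEq n] [CommRing R] [LinearOrder R]
    [IsStrictOrderedRing R] [StarRing R] [TrivialStar R] {M : Matrix n n R} (hM : M.PosSemidef)
    (x y : n → R) :
    (x ⬝ᵥ M *ᵥ y) ^ 2 ≤ (x ⬝ᵥ M *ᵥ x) * (y ⬝ᵥ M *ᵥ y) := by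
  have hsymm : LinearMap.IsSymm M.toBilin' := LinearMap.BilinForm.isSymm_iff.mp <|
    isSymm_toBilin'_iff_isSymm.mpr (isHermitian_iff_isSymm.mp hM.isHermitian)
  have hnonneg (v : n → R) : 0 ≤ M.toBilin' v v := by
    simpa only [toBilin'_apply', star_trivial] using hM.dotProduct_mulVec_nonneg v
  simpa only [toBilin'_apply'] using M.toBilin'.apply_sq_le_of_symm hnonneg hsymm x y

theorem PosSemidef.sq_dotProduct_le_mul_inv [DecidableEq n] [Field R] [LinearOrder R]
    [IsStrictOrderedRing R] [StarRing R] [TrivialStar R] {M : Matrix n n R}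
    (hM : M.PosSemidef) (hMu : IsUnit M.det) (x y : n → R) :
    (x ⬝ᵥ y) ^ 2 ≤ (x ⬝ᵥ M *ᵥ x) * (y ⬝ᵥ M⁻¹ *ᵥ y) := by
  have hMe : M *ᵥ (M⁻¹ *ᵥ y) = y := by rw [mulVec_mulVec, mul_nonsing_inv M hMu, one_mulVec]
  simpa only [hMe, dotProduct_comm (M⁻¹ *ᵥ y)] using hM.sq_dotProduct_mulVec_le x (M⁻¹ *ᵥ y)

theorem dotProduct_transpose_mul_mul_mulVec [CommSemiring R] (A M : Matrix n n R) (x : n → R) :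
    x ⬝ᵥ (Aᵀ * M * A) *ᵥ x = (A *ᵥ x) ⬝ᵥ M *ᵥ (A *ᵥ x) := by
  rw [← mulVec_mulVec, ← mulVec_mulVec, dotProduct_transpose_mulVec, dotProduct_comm]

end Matrix

theorem sandwich_variance_efficiency_bound_general
    (q : ℕ)
    (Ω W : Matrix (Fin q) (Fin q) ℝ)
    (hΩpd : Ω.PosDef)
    (hWsymm : W.IsSymm) (hWpd : W.PosDef)
    (d : Fin q → ℝ) (hd : d ≠ 0) :
    (d ⬝ᵥ (W * Ω * W).mulVec d) / (d ⬝ᵥ W.mulVec d) ^ 2 ≥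
      1 / (d ⬝ᵥ Ω⁻¹.mulVec d) ∧
    (d ⬝ᵥ (Ω⁻¹ * Ω * Ω⁻¹).mulVec d) / (d ⬝ᵥ Ω⁻¹.mulVec d) ^ 2 =
      1 / (d ⬝ᵥ Ω⁻¹.mulVec d) := by
  have hΩu : IsUnit Ω.det := hΩpd.isUnit.map detMonoidHom
  have hB : 0 < d ⬝ᵥ W *ᵥ d := hWpd.dotProduct_mulVec_pos hd
  have hC : 0 < d ⬝ᵥ Ω⁻¹ *ᵥ d := hΩpd.inv.dotProduct_mulVec_pos hd
  have hCS : (d ⬝ᵥ W *ᵥ d) ^ 2 ≤ (d ⬝ᵥ (W * Ω * W) *ᵥ d) * (d ⬝ᵥ Ω⁻¹ *ᵥ d) := by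
    have := hΩpd.posSemidef.sq_dotProduct_le_mul_inv hΩu (W *ᵥ d) d
    rwa [dotProduct_comm, ← dotProduct_transpose_mul_mul_mulVec, hWsymm.eq] at this
  refine ⟨?_, ?_⟩
  · rw [ge_iff_le, div_le_div_iff₀ hC (by positivity), one_mul]
    exact hCS
  · rw [nonsing_inv_mul Ω hΩu, Matrix.one_mul, sq, div_mul_cancel_left₀ hC.ne', one_div]

/-- Efficiency bound for GMM-type two-sample IV estimators: for
symmetric positive definite `Ω, W` and `d ≠ 0`,
`(dᵀWΩWd)/(dᵀWd)² ≥ 1/(dᵀΩ⁻¹d)`, with equality when `W = Ω⁻¹`. -/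
theorem sandwich_variance_efficiency_bound
    (q : ℕ) (hq : 1 ≤ q)
    (Ω W : Matrix (Fin q) (Fin q) ℝ)
    (hΩsymm : Ω.IsSymm) (hΩpd : Ω.PosDef)
    (hWsymm : W.IsSymm) (hWpd : W.PosDef)
    (d : Fin q → ℝ) (hd : d ≠ 0) :
    (d ⬝ᵥ (W * Ω * W).mulVec d) / (d ⬝ᵥ W.mulVec d) ^ 2 ≥
      1 / (d ⬝ᵥ Ω⁻¹.mulVec d) ∧
    (d ⬝ᵥ (Ω⁻¹ * Ω * Ω⁻¹).mulVec d) / (d ⬝ᵥ Ω⁻¹.mulVec d) ^ 2 =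
      1 / (d ⬝ᵥ Ω⁻¹.mulVec d) :=
  sandwich_variance_efficiency_bound_general q Ω W hΩpd hWsymm hWpd d hd
end

section
/- Let q ≥ 1, let Σ be a symmetric positive definite q×q real matrix, let c > 0, let Ω = c·Σ^{-1}, and let d ∈ ℝ^q with d ≠ 0. Then the sandwich variance with weighting matrix W = Σ attains the efficiency lower bound: (dᵀ Σ Ω Σ d)/(dᵀ Σ d)² = 1/(dᵀ Ω^{-1} d). -/
open Matrix

/-! With `W = Σ` and `Ω = c • Σ⁻¹`, the sandwich collapses, `Σ Ω Σ = c • Σ`, and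
`Ω⁻¹ = c⁻¹ • Σ`, so both sides equal `c / (dᵀ Σ d)`. -/

namespace Matrix

variable {n : Type*} [Fintype n] [DecidableEq n]

theorem mul_smul_inv_mul_self {α : Type*} [CommRing α] {A : Matrix n n α} (h : IsUnit A.det)
    (c : α) : A * (c • A⁻¹) * A = c • A := by
  rw [Matrix.mul_smul, Matrix.smul_mul, mul_nonsing_inv _ h, one_mul]

theorem inv_smul_inv {K : Type*} [Field K] {A : Matrix n n K} (h : IsUnit A.det) {c : K}
    (hc : c ≠ 0) : (c • A⁻¹)⁻¹ = c⁻¹ • A := by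
  have hinv : IsUnit A⁻¹.det := (isUnit_nonsing_inv_det_iff).mpr h
  simpa [Units.smul_def, nonsing_inv_nonsing_inv _ h] using inv_smul' A⁻¹ (Units.mk0 c hc) hinv

end Matrix

theorem tstsls_efficient_when_homogeneous_general
    (q : ℕ)
    (S : Matrix (Fin q) (Fin q) ℝ)
    (hSpd : S.PosDef)
    (c : ℝ) (hc : 0 < c)
    (Ω : Matrix (Fin q) (Fin q) ℝ) (hΩ : Ω = c • S⁻¹)
    (d : Fin q → ℝ) (hd : d ≠ 0) :
    (d ⬝ᵥ (S * Ω * S).mulVec d) / (d ⬝ᵥ S.mulVec d) ^ 2 =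
      1 / (d ⬝ᵥ Ω⁻¹.mulVec d) := by
  have hS : IsUnit S.det := (isUnit_iff_isUnit_det S).mp hSpd.isUnit
  have hquad : 0 < d ⬝ᵥ S *ᵥ d := by simpa using hSpd.dotProduct_mulVec_pos hd
  subst hΩ
  rw [mul_smul_inv_mul_self hS, inv_smul_inv hS hc.ne', smul_mulVec, smul_mulVec,
    dotProduct_smul, dotProduct_smul, smul_eq_mul, smul_eq_mul]
  field_simp

/-- When `Ω = c·Σ⁻¹` with `c > 0` and `Σ` symmetric positive
definite, the sandwich variance with weighting matrix `W = Σ` attains the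
efficiency lower bound: `(dᵀΣΩΣd)/(dᵀΣd)² = 1/(dᵀΩ⁻¹d)`. -/
theorem tstsls_efficient_when_homogeneous
    (q : ℕ) (hq : 1 ≤ q)
    (S : Matrix (Fin q) (Fin q) ℝ)
    (hSsymm : S.IsSymm) (hSpd : S.PosDef)
    (c : ℝ) (hc : 0 < c)
    (Ω : Matrix (Fin q) (Fin q) ℝ) (hΩ : Ω = c • S⁻¹)
    (d : Fin q → ℝ) (hd : d ≠ 0) :
    (d ⬝ᵥ (S * Ω * S).mulVec d) / (d ⬝ᵥ S.mulVec d) ^ 2 =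
      1 / (d ⬝ᵥ Ω⁻¹.mulVec d) :=
  tstsls_efficient_when_homogeneous_general q S hSpd c hc Ω hΩ d hd
end

section
/- On a probability space, let z^a, v^a, z^b, v^b, u^b be real square-integrable random variables with z^a independent of v^a and z^b independent of the pair (v^b, u^b). Let γ, β₀ ∈ ℝ with γ ≠ 0 and Var(z^a) ≠ 0, and define x^a = γ z^a + v^a, x^b = γ z^b + v^b, y^b = β₀ x^b + u^b. Then Cov(z^a, x^a) = γ Var(z^a) ≠ 0 and Cov(z^b, y^b)/Cov(z^a, x^a) = β₀ · Var(z^b)/Var(z^a). -/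
/-! Both structural equations are linear with an error term independent of the instrument, so
the error drops out of every covariance with the instrument: `Cov(zᵃ, xᵃ) = γ Var(zᵃ)` and
`Cov(zᵇ, yᵇ) = β₀ γ Var(zᵇ)`. The two samples share `γ` and `β₀` but not the variance of the
instrument, so the ratio of the covariances is `β₀ Var(zᵇ) / Var(zᵃ)`. -/

open MeasureTheory ProbabilityTheory

/-- Covariance of two real random variables. -/
noncomputable def cov {Ωs : Type*} [MeasurableSpace Ωs] (μ : Measure Ωs)
    (X Y : Ωs → ℝ) : ℝ :=
  ∫ ω, (X ω - ∫ ω', X ω' ∂μ) * (Y ω - ∫ ω', Y ω' ∂μ) ∂μ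

theorem cov_eq_covariance {Ω : Type*} [MeasurableSpace Ω] (μ : Measure Ω) (X Y : Ω → ℝ) :
    cov μ X Y = cov[X, Y; μ] :=
  rfl

theorem ProbabilityTheory.IndepFun.covariance_const_mul_add {Ω : Type*} [MeasurableSpace Ω]
    {μ : Measure Ω} [IsFiniteMeasure μ] {X Y Z : Ω → ℝ}
    (hX : MemLp X 2 μ) (hY : MemLp Y 2 μ) (hZ : MemLp Z 2 μ) (hXZ : IndepFun X Z μ) (c : ℝ) :
    cov[X, fun ω ↦ c * Y ω + Z ω; μ] = c * cov[X, Y; μ] := by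
  have hcY : MemLp (fun ω ↦ c * Y ω) 2 μ := hY.const_mul c
  calc cov[X, fun ω ↦ c * Y ω + Z ω; μ]
      = cov[X, fun ω ↦ c * Y ω; μ] + cov[X, Z; μ] := covariance_add_right hX hcY hZ
    _ = c * cov[X, Y; μ] := by
      rw [covariance_const_mul_right, hXZ.covariance_eq_zero hX hZ, add_zero]

/-- Population limit of the two-sample covariance (TSCOV) estimator
with one instrument: `Cov(z^a, x^a) = γ·Var(z^a) ≠ 0` and
`Cov(z^b, y^b)/Cov(z^a, x^a) = β₀·Var(z^b)/Var(z^a)`. -/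
theorem tscov_population_limit
    {Ωs : Type*} [MeasurableSpace Ωs] (μ : Measure Ωs) [IsProbabilityMeasure μ]
    (za va zb vb ub : Ωs → ℝ)
    (hza2 : MemLp za 2 μ) (hva2 : MemLp va 2 μ)
    (hzb2 : MemLp zb 2 μ) (hvb2 : MemLp vb 2 μ) (hub2 : MemLp ub 2 μ)
    (hindepa : IndepFun za va μ)
    (hindepb : IndepFun zb (fun ω => (vb ω, ub ω)) μ)
    (γ β₀ : ℝ) (hγ : γ ≠ 0) (hvarza : cov μ za za ≠ 0)
    (xa : Ωs → ℝ) (hxa : xa = fun ω => γ * za ω + va ω)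
    (xb : Ωs → ℝ) (hxb : xb = fun ω => γ * zb ω + vb ω)
    (yb : Ωs → ℝ) (hyb : yb = fun ω => β₀ * xb ω + ub ω) :
    cov μ za xa = γ * cov μ za za ∧ cov μ za xa ≠ 0 ∧
      cov μ zb yb / cov μ za xa = β₀ * (cov μ zb zb / cov μ za za) := by
  subst hxa hxb hyb
  simp only [cov_eq_covariance] at hvarza ⊢
  have hxb2 : MemLp (fun ω ↦ γ * zb ω + vb ω) 2 μ := (hzb2.const_mul γ).add hvb2
  have hcov_a : cov[za, fun ω ↦ γ * za ω + va ω; μ] = γ * cov[za, za; μ] :=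
    hindepa.covariance_const_mul_add hza2 hza2 hva2 γ
  have hcov_b :
      cov[zb, fun ω ↦ β₀ * (γ * zb ω + vb ω) + ub ω; μ] = β₀ * (γ * cov[zb, zb; μ]) := by
    rw [(hindepb.comp measurable_id measurable_snd).covariance_const_mul_add hzb2 hxb2 hub2,
      (hindepb.comp measurable_id measurable_fst).covariance_const_mul_add hzb2 hzb2 hvb2]
  have hcov_a_ne : γ * cov[za, za; μ] ≠ 0 := mul_ne_zero hγ hvarza
  refine ⟨hcov_a, hcov_a ▸ hcov_a_ne, ?_⟩
  rw [hcov_a, hcov_b]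
  field_simp
end

section
/- In the binary-IV setup, assume P(z = 1) > 0 and P(z = 0) > 0 and monotonicity. Then E[y | z = 1] − E[y | z = 0] = E[(g(1, u) − g(0, u))·1_C], where C is the complier event. -/
open MeasureTheory ProbabilityTheory

/-- Conditional expectation of a real random variable given an event:
`E[Y | E] = E[Y·1_E]/P(E)`. -/
noncomputable def cexp {Ωs : Type*} [MeasurableSpace Ωs] (μ : Measure Ωs)
    (Y : Ωs → ℝ) (E : Set Ωs) : ℝ :=
  (∫ ω in E, Y ω ∂μ) / (μ E).toReal

/-! Write `Y b = g (f b v) u` for the potential outcome under instrument value `b`; then `y = Y z`.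
Since `z` is independent of `(u, v)`, conditioning on `z = b` does not change the law of `Y b`, so
`E[y | z = b] = E[Y b]`. By monotonicity, `Y 1 - Y 0` vanishes for always- and never-takers and
equals `g 1 u - g 0 u` for compliers. -/

lemma measurable_apply_of_countable {α ι U γ : Type*} [MeasurableSpace α] [MeasurableSpace ι]
    [Countable ι] [MeasurableSingletonClass ι] [MeasurableSpace U] [MeasurableSpace γ]
    {g : ι → U → γ} (hg : ∀ i, Measurable (g i)) {k : α → ι} (hk : Measurable k) {u : α → U}
    (hu : Measurable u) : Measurable fun a => g (k a) (u a) :=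
  (measurable_from_prod_countable_right (f := fun q : ι × U => g q.1 q.2) hg).comp (hk.prodMk hu)

section

variable {Ω : Type*} [MeasurableSpace Ω] {μ : Measure Ω}

lemma cexp_congr {Y Y' : Ω → ℝ} {s : Set Ω} (hs : MeasurableSet s) (h : Set.EqOn Y Y' s) :
    cexp μ Y s = cexp μ Y' s := by
  rw [cexp, cexp, setIntegral_congr_fun hs h]

lemma cexp_comp_eq_integral_of_indepFun [IsFiniteMeasure μ] {β γ : Type*} [MeasurableSpace β]
    [MeasurableSpace γ] {Z : Ω → β} {W : Ω → γ} (hZW : IndepFun Z W μ) (hZ : Measurable Z)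
    (hW : AEMeasurable W μ) {s : Set β} (hs : MeasurableSet s) (hμs : μ (Z ⁻¹' s) ≠ 0)
    {h : γ → ℝ} (hh : AEStronglyMeasurable h (μ.map W)) :
    cexp μ (fun ω => h (W ω)) (Z ⁻¹' s) = ∫ ω, h (W ω) ∂μ := by
  have hμs' : (μ (Z ⁻¹' s)).toReal ≠ 0 := ENNReal.toReal_ne_zero.2 ⟨hμs, measure_ne_top μ _⟩
  rw [cexp, ((IndepFun_iff_Indep Z W μ).1 hZW).setIntegral_eq_mul hZ.comap_le hW ⟨s, hs, rfl⟩ hh,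
    Measure.real, mul_div_cancel_left₀ _ hμs']

lemma integrable_select_of_fintype {ι : Type*} [Fintype ι] {G : ι → Ω → ℝ}
    (hG : ∀ i, Integrable (G i) μ) {k : Ω → ι}
    (hm : AEStronglyMeasurable (fun ω => G (k ω) ω) μ) :
    Integrable (fun ω => G (k ω) ω) μ :=
  (integrable_finsetSum Finset.univ fun i _ => (hG i).norm).mono' hm <| ae_of_all _ fun ω => by
    simpa using Finset.single_le_sum (f := fun i => ‖G i ω‖) (fun i _ => norm_nonneg _)
      (Finset.mem_univ (k ω))

end

lemma Bool.apply_sub_apply_eq_ite_of_imp {β : Type*} [AddGroup β] (G : Bool → β) {a b : Bool}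
    (h : a = true → b = true) :
    G b - G a = if a = false ∧ b = true then G true - G false else 0 := by
  cases a <;> cases b <;> simp_all

/-- In the binary-IV setup with monotonicity (no defiers),
`E[y | z = 1] − E[y | z = 0] = E[(g(1,u) − g(0,u))·1_C]` for the complier
event `C`. -/
theorem binary_iv_reduced_form_eq_complier_effect
    {Ωs V U : Type*} [MeasurableSpace Ωs] [MeasurableSpace V] [MeasurableSpace U]
    (μ : Measure Ωs) [IsProbabilityMeasure μ]
    (z : Ωs → Bool) (hzmeas : Measurable z)
    (v : Ωs → V) (hvmeas : Measurable v)
    (u : Ωs → U) (humeas : Measurable u)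
    (f : Bool → V → Bool) (hfmeas : ∀ b, Measurable (f b))
    (g : Bool → U → ℝ) (hgmeas : ∀ b, Measurable (g b))
    (hgint : ∀ b, Integrable (fun ω => g b (u ω)) μ)
    (hindep : IndepFun z (fun ω => (u ω, v ω)) μ)
    (hmono : ∀ w : V, f false w = true → f true w = true)
    (hz1 : 0 < μ {ω | z ω = true}) (hz0 : 0 < μ {ω | z ω = false})
    (y : Ωs → ℝ) (hy : y = fun ω => g (f (z ω) (v ω)) (u ω))
    (C : Set Ωs) (hC : C = {ω | f false (v ω) = false ∧ f true (v ω) = true}) :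
    cexp μ y {ω | z ω = true} - cexp μ y {ω | z ω = false} =
      ∫ ω in C, (g true (u ω) - g false (u ω)) ∂μ := by
  subst hC
  set W : Ωs → U × V := fun ω => (u ω, v ω)
  set Y : Bool → U × V → ℝ := fun b p => g (f b p.2) p.1
  have hYmeas : ∀ b, Measurable (Y b) := fun b =>
    measurable_apply_of_countable hgmeas ((hfmeas b).comp measurable_snd) measurable_fst
  have hWmeas : Measurable W := humeas.prodMk hvmeas
  have hYint : ∀ b, Integrable (fun ω => Y b (W ω)) μ := fun b =>
    integrable_select_of_fintype hgint ((hYmeas b).comp hWmeas).aestronglyMeasurable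
  have hcexp : ∀ c, 0 < μ {ω | z ω = c} → cexp μ y {ω | z ω = c} = ∫ ω, Y c (W ω) ∂μ := by
    intro c hc
    have hset : MeasurableSet {ω | z ω = c} := hzmeas (measurableSet_singleton c)
    calc cexp μ y {ω | z ω = c} = cexp μ (fun ω => Y c (W ω)) (z ⁻¹' {c}) :=
          cexp_congr hset fun ω (hω : z ω = c) => by simp [hy, hω, Y, W]
      _ = ∫ ω, Y c (W ω) ∂μ :=
          cexp_comp_eq_integral_of_indepFun hindep hzmeas hWmeas.aemeasurable
            (measurableSet_singleton c) hc.ne' (hYmeas c).aestronglyMeasurable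
  have hCmeas : MeasurableSet {ω | f false (v ω) = false ∧ f true (v ω) = true} :=
    ((hfmeas false).comp hvmeas (measurableSet_singleton false)).inter
      ((hfmeas true).comp hvmeas (measurableSet_singleton true))
  rw [hcexp true hz1, hcexp false hz0, ← integral_sub (hYint true) (hYint false),
    ← integral_indicator hCmeas]
  congr 1 with ω
  rw [Bool.apply_sub_apply_eq_ite_of_imp (fun b => g b (u ω)) (hmono (v ω)), Set.indicator_apply]
  rfl
end

section
/- In the binary-IV setup, assume P(z = 1) > 0, P(z = 0) > 0, monotonicity, and P(C) > 0 for the complier event C. Then (E[y | z = 1] − E[y | z = 0])/(E[x | z = 1] − E[x | z = 0]) = E[g(1, u) − g(0, u) | C], the local average treatment effect among compliers. -/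
open MeasureTheory ProbabilityTheory

/-! Since `z` is independent of `(u, v)`, the mean of `g (f z v) u` given `z = b` is the
unconditional mean of `g (f b v) u`. Under monotonicity `g (f 1 v) u - g (f 0 v) u` vanishes
off the compliers and equals `g 1 u - g 0 u` on them, so the difference of the two conditional
means is `∫_C (g 1 u - g 0 u)`. The exposure is the case `g b _ = 1_{b = 1}`, where this
integral is `P(C)`; the ratio is therefore `E[g 1 u - g 0 u | C]`. -/

section

variable {Ω α β : Type*} [MeasurableSpace Ω] [MeasurableSpace α] [MeasurableSpace β]

theorem cexp_eq_integral_of_indepFun {μ : Measure Ω} [IsFiniteMeasure μ]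
    [MeasurableSingletonClass α] {X : Ω → α} {W : Ω → β} (hX : Measurable X)
    (hW : AEMeasurable W μ) (hXW : IndepFun X W μ) (ψ : α → β → ℝ) {a : α}
    (hψ : AEStronglyMeasurable (ψ a) (μ.map W)) (ha : μ {ω | X ω = a} ≠ 0) :
    cexp μ (fun ω => ψ (X ω) (W ω)) {ω | X ω = a} = ∫ ω, ψ a (W ω) ∂μ := by
  have hA : MeasurableSet[MeasurableSpace.comap X inferInstance] {ω | X ω = a} :=
    ⟨{a}, measurableSet_singleton a, rfl⟩
  have hreal : μ.real {ω | X ω = a} ≠ 0 := (measureReal_ne_zero_iff).2 ha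
  calc cexp μ (fun ω => ψ (X ω) (W ω)) {ω | X ω = a}
      = (∫ ω in {ω | X ω = a}, ψ a (W ω) ∂μ) / μ.real {ω | X ω = a} :=
        congrArg (· / _) (setIntegral_congr_fun (hX (measurableSet_singleton a))
          fun ω (hω : X ω = a) => by rw [hω])
    _ = ∫ ω, ψ a (W ω) ∂μ := by
        rw [Indep.setIntegral_eq_mul hX.comap_le hXW hW hA hψ, mul_div_cancel_left₀ _ hreal]

theorem integrable_select_of_forall_integrable {E : Type*} [NormedAddCommGroup E] {μ : Measure Ω}
    {B : Ω → Bool} (hB : Measurable B) {h : Bool → Ω → E} (hh : ∀ b, Integrable (h b) μ) :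
    Integrable (fun ω => h (B ω) ω) μ := by
  classical
  have : (fun ω => h (B ω) ω) = {ω | B ω = true}.piecewise (h true) (h false) := by
    funext ω
    by_cases hω : B ω = true <;> simp [hω]
  rw [this]
  exact Integrable.piecewise (hB (measurableSet_singleton true)) (hh true).integrableOn
    (hh false).integrableOn

theorem sub_eq_ite_of_imp {M : Type*} [AddGroup M] (g : Bool → M) {a b : Bool}
    (hab : a = true → b = true) :
    g b - g a = if a = false ∧ b = true then g true - g false else 0 := by
  cases a <;> cases b <;> simp_all

end

section BinaryIV

variable {Ω V U : Type*} [MeasurableSpace Ω] [MeasurableSpace V] [MeasurableSpace U]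
  {μ : Measure Ω} [IsFiniteMeasure μ] {z : Ω → Bool} {v : Ω → V} {u : Ω → U} {f : Bool → V → Bool}

theorem cexp_sub_cexp_eq_setIntegral_compliers (hz : Measurable z) (hv : Measurable v)
    (hu : Measurable u) (hf : ∀ b, Measurable (f b))
    (hindep : IndepFun z (fun ω => (u ω, v ω)) μ)
    (hmono : ∀ w : V, f false w = true → f true w = true)
    (hz1 : μ {ω | z ω = true} ≠ 0) (hz0 : μ {ω | z ω = false} ≠ 0)
    (g : Bool → U → ℝ) (hg : ∀ b, Measurable (g b))
    (hgint : ∀ b, Integrable (fun ω => g b (u ω)) μ) :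
    cexp μ (fun ω => g (f (z ω) (v ω)) (u ω)) {ω | z ω = true}
      - cexp μ (fun ω => g (f (z ω) (v ω)) (u ω)) {ω | z ω = false}
      = ∫ ω in {ω | f false (v ω) = false ∧ f true (v ω) = true},
          (g true (u ω) - g false (u ω)) ∂μ := by
  have hψ (b : Bool) : Measurable fun p : U × V => g (f b p.2) p.1 :=
    (measurable_from_prod_countable_right (f := fun q : Bool × U => g q.1 q.2) hg).comp
      (((hf b).comp measurable_snd).prodMk measurable_fst)
  have hint (b : Bool) : Integrable (fun ω => g (f b (v ω)) (u ω)) μ :=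
    integrable_select_of_forall_integrable ((hf b).comp hv) hgint
  have hC : MeasurableSet {ω | f false (v ω) = false ∧ f true (v ω) = true} :=
    (hv ((hf false) (measurableSet_singleton false))).inter
      (hv ((hf true) (measurableSet_singleton true)))
  have hcexp (b : Bool) (hb : μ {ω | z ω = b} ≠ 0) :
      cexp μ (fun ω => g (f (z ω) (v ω)) (u ω)) {ω | z ω = b}
        = ∫ ω, g (f b (v ω)) (u ω) ∂μ :=
    cexp_eq_integral_of_indepFun hz (hu.prodMk hv).aemeasurable hindep
      (fun b p => g (f b p.2) p.1) (hψ b).aestronglyMeasurable hb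
  rw [hcexp true hz1, hcexp false hz0, ← integral_sub (hint true) (hint false),
    ← integral_indicator hC]
  congr 1 with ω
  rw [sub_eq_ite_of_imp (fun b => g b (u ω)) (hmono (v ω)), Set.indicator_apply]
  rfl

end BinaryIV

theorem binary_iv_late_identification_general
    {Ωs V U : Type*} [MeasurableSpace Ωs] [MeasurableSpace V] [MeasurableSpace U]
    (μ : Measure Ωs) [IsProbabilityMeasure μ]
    (z : Ωs → Bool) (hzmeas : Measurable z)
    (v : Ωs → V) (hvmeas : Measurable v)
    (u : Ωs → U) (humeas : Measurable u)
    (f : Bool → V → Bool) (hfmeas : ∀ b, Measurable (f b))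
    (g : Bool → U → ℝ) (hgmeas : ∀ b, Measurable (g b))
    (hgint : ∀ b, Integrable (fun ω => g b (u ω)) μ)
    (hindep : IndepFun z (fun ω => (u ω, v ω)) μ)
    (hmono : ∀ w : V, f false w = true → f true w = true)
    (hz1 : 0 < μ {ω | z ω = true}) (hz0 : 0 < μ {ω | z ω = false})
    (x : Ωs → ℝ) (hx : x = fun ω => if f (z ω) (v ω) then (1 : ℝ) else 0)
    (y : Ωs → ℝ) (hy : y = fun ω => g (f (z ω) (v ω)) (u ω))
    (C : Set Ωs) (hC : C = {ω | f false (v ω) = false ∧ f true (v ω) = true}) :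
    (cexp μ y {ω | z ω = true} - cexp μ y {ω | z ω = false}) /
      (cexp μ x {ω | z ω = true} - cexp μ x {ω | z ω = false}) =
    cexp μ (fun ω => g true (u ω) - g false (u ω)) C := by
  subst hx hy hC
  have hnum := cexp_sub_cexp_eq_setIntegral_compliers hzmeas hvmeas humeas hfmeas hindep hmono
    hz1.ne' hz0.ne' g hgmeas hgint
  have hden := cexp_sub_cexp_eq_setIntegral_compliers hzmeas hvmeas humeas hfmeas hindep hmono
    hz1.ne' hz0.ne' (fun b _ => if b then (1 : ℝ) else 0) (fun _ => measurable_const)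
    (fun _ => integrable_const _)
  simp only [Bool.false_eq_true, ↓reduceIte, sub_zero, setIntegral_const, smul_eq_mul,
    mul_one] at hden
  rw [hnum, hden]
  rfl

/-- LATE identification in the binary-IV setup with monotonicity:
the population Wald ratio equals the local average treatment effect among
compliers, `E[g(1,u) − g(0,u) | C]`. -/
theorem binary_iv_late_identification
    {Ωs V U : Type*} [MeasurableSpace Ωs] [MeasurableSpace V] [MeasurableSpace U]
    (μ : Measure Ωs) [IsProbabilityMeasure μ]
    (z : Ωs → Bool) (hzmeas : Measurable z)
    (v : Ωs → V) (hvmeas : Measurable v)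
    (u : Ωs → U) (humeas : Measurable u)
    (f : Bool → V → Bool) (hfmeas : ∀ b, Measurable (f b))
    (g : Bool → U → ℝ) (hgmeas : ∀ b, Measurable (g b))
    (hgint : ∀ b, Integrable (fun ω => g b (u ω)) μ)
    (hindep : IndepFun z (fun ω => (u ω, v ω)) μ)
    (hmono : ∀ w : V, f false w = true → f true w = true)
    (hz1 : 0 < μ {ω | z ω = true}) (hz0 : 0 < μ {ω | z ω = false})
    (x : Ωs → ℝ) (hx : x = fun ω => if f (z ω) (v ω) then (1 : ℝ) else 0)
    (y : Ωs → ℝ) (hy : y = fun ω => g (f (z ω) (v ω)) (u ω))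
    (C : Set Ωs) (hC : C = {ω | f false (v ω) = false ∧ f true (v ω) = true})
    (hCpos : 0 < μ C) :
    (cexp μ y {ω | z ω = true} - cexp μ y {ω | z ω = false}) /
      (cexp μ x {ω | z ω = true} - cexp μ x {ω | z ω = false}) =
    cexp μ (fun ω => g true (u ω) - g false (u ω)) C :=
  binary_iv_late_identification_general μ z hzmeas v hvmeas u humeas f hfmeas g hgmeas hgint hindep
    hmono hz1 hz0 x hx y hy C hC
end

section
/- In the binary-IV setup (without monotonicity), define the class random variable t(v) ∈ {at, co, nt, de} by: t = at if f(0, v) = 1 and f(1, v) = 1; t = co if f(0, v) = 0 and f(1, v) = 1; t = nt if f(0, v) = 0 and f(1, v) = 0; t = de if f(0, v) = 1 and f(1, v) = 0. Then for every class value t₀ with P(t(v) = t₀) > 0, the exposure x = f(z, v) and the noise u are conditionally independent given the event {t(v) = t₀}: for every subset A ⊆ {0,1} and every measurable set B ⊆ U, P(x ∈ A, u ∈ B | t(v) = t₀) = P(x ∈ A | t(v) = t₀) · P(u ∈ B | t(v) = t₀). -/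
open MeasureTheory ProbabilityTheory

/-- Unconfoundedness within classes in the binary-IV setup
(without monotonicity): conditional on the class `t(v) = (f(0,v), f(1,v))`,
the exposure `x = f(z,v)` and the noise `u` are independent:
`P(x ∈ A, u ∈ B | t(v) = t₀) = P(x ∈ A | t(v) = t₀)·P(u ∈ B | t(v) = t₀)`. -/
theorem binary_iv_conditional_independence_given_class
    {Ωs V U : Type*} [MeasurableSpace Ωs] [MeasurableSpace V] [MeasurableSpace U]
    (μ : Measure Ωs) [IsProbabilityMeasure μ]
    (z : Ωs → Bool) (hzmeas : Measurable z)
    (v : Ωs → V) (hvmeas : Measurable v)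
    (u : Ωs → U) (humeas : Measurable u)
    (f : Bool → V → Bool) (hfmeas : ∀ b, Measurable (f b))
    (hindep : IndepFun z (fun ω => (u ω, v ω)) μ)
    -- the class events: `t₀ = (f(0,v), f(1,v))`
    (T : Bool × Bool → Set Ωs)
    (hT : ∀ t₀, T t₀ = {ω | f false (v ω) = t₀.1 ∧ f true (v ω) = t₀.2}) :
    ∀ t₀ : Bool × Bool, 0 < μ (T t₀) →
      ∀ (A : Set Bool) (B : Set U), MeasurableSet B →
        (μ ({ω | f (z ω) (v ω) ∈ A ∧ u ω ∈ B} ∩ T t₀)).toReal / (μ (T t₀)).toReal =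
          ((μ ({ω | f (z ω) (v ω) ∈ A} ∩ T t₀)).toReal / (μ (T t₀)).toReal) *
            ((μ ({ω | u ω ∈ B} ∩ T t₀)).toReal / (μ (T t₀)).toReal) := by
  intro t₀ hpos A B hB
  set C : Set V := {v' | f false v' = t₀.1 ∧ f true v' = t₀.2} with hC
  have hCmeas : MeasurableSet C :=
    ((hfmeas false) (measurableSet_singleton t₀.1)).inter
      ((hfmeas true) (measurableSet_singleton t₀.2))
  set S : Set Bool := {b | (if b then t₀.2 else t₀.1) ∈ A} with hS
  have hSmeas : MeasurableSet S := trivial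
  have hTeq : T t₀ = (fun ω => (u ω, v ω)) ⁻¹' ((Set.univ : Set U) ×ˢ C) := by
    rw [hT]; ext ω; simp [C, Set.mem_prod]
  have key : ∀ ω, ω ∈ T t₀ → (f (z ω) (v ω) ∈ A ↔ z ω ∈ S) := by
    intro ω hω
    rw [hT] at hω
    obtain ⟨h0, h1⟩ := hω
    cases hz : z ω <;> simp [S, hz, h0, h1]
  have E1 : {ω | f (z ω) (v ω) ∈ A} ∩ T t₀
      = z ⁻¹' S ∩ (fun ω => (u ω, v ω)) ⁻¹' ((Set.univ : Set U) ×ˢ C) := by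
    rw [← hTeq]; ext ω
    simp only [Set.mem_inter_iff, Set.mem_setOf_eq, Set.mem_preimage]
    exact ⟨fun ⟨h, ht⟩ => ⟨(key ω ht).1 h, ht⟩, fun ⟨h, ht⟩ => ⟨(key ω ht).2 h, ht⟩⟩
  have E2 : {ω | f (z ω) (v ω) ∈ A ∧ u ω ∈ B} ∩ T t₀
      = z ⁻¹' S ∩ (fun ω => (u ω, v ω)) ⁻¹' (B ×ˢ C) := by
    ext ω
    simp only [Set.mem_inter_iff, Set.mem_setOf_eq, Set.mem_preimage, Set.mem_prod, hT,
      Set.mem_setOf_eq]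
    constructor
    · rintro ⟨⟨hx, hu⟩, ht⟩
      exact ⟨(key ω (by rw [hT]; exact ht)).1 hx, hu, ht⟩
    · rintro ⟨hz, hu, ht⟩
      exact ⟨⟨(key ω (by rw [hT]; exact ht)).2 hz, hu⟩, ht⟩
  have E3 : {ω | u ω ∈ B} ∩ T t₀ = (fun ω => (u ω, v ω)) ⁻¹' (B ×ˢ C) := by
    rw [hTeq]; ext ω; simp [Set.mem_prod]
  have ind1 := hindep.measure_inter_preimage_eq_mul S (B ×ˢ C) hSmeas (hB.prod hCmeas)
  have ind2 := hindep.measure_inter_preimage_eq_mul S ((Set.univ : Set U) ×ˢ C) hSmeas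
    (MeasurableSet.univ.prod hCmeas)
  have hTne : μ (T t₀) ≠ ⊤ := measure_ne_top μ _
  have hTR : (μ (T t₀)).toReal ≠ 0 := by
    have := ENNReal.toReal_pos hpos.ne' hTne
    exact this.ne'
  rw [E1, E2, E3, ind1, ind2, hTeq]
  rw [hTeq] at hTR
  rw [ENNReal.toReal_mul, ENNReal.toReal_mul]
  field_simp
end
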